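/- In PG(2,q) with q an odd prime power, there are exactly q^2(q^2-1) proper conics passing through the point [1,0,0]. -/

import Mathlib

/-!
A proper conic through `[1,0,0]` comes from a symmetric invertible `M` with `M 0 0 = 0`, and in
odd characteristic the conic determines `M` up to a scalar: completing the isotropic vector `e₀` to
a hyperbolic pair and adding a vector orthogonal to both brings `M` to `2 x₀ x₁ + a x₂²`, and a form
with the same zeros as this one is a multiple of it, as a few test points show. Scaling so that
the first nonzero entry of `(M 0 1, M 0 2)` is `1` picks one matrix per conic. These matrices are
counted by their free entries subject to `det ≠ 0`, a condition affine in a single entry: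
`q³ (q - 1) + q² (q - 1) = q² (q² - 1)`.
-/

open Matrix

/-- The zero set in `PG(2,q)` of the quadratic form associated to a symmetric matrix `M`. -/
def conicSet {F : Type} [Field F] (M : Matrix (Fin 3) (Fin 3) F) :
    Set (Projectivization F (Fin 3 → F)) :=
  {p | p.rep ⬝ᵥ M.mulVec p.rep = 0}

/-- A proper conic: the zero set of a quadratic form with invertible symmetric matrix. -/
def IsProperConic {F : Type} [Field F] (S : Set (Projectivization F (Fin 3 → F))) : Prop :=
  ∃ M : Matrix (Fin 3) (Fin 3) F, M.IsSymm ∧ IsUnit M.det ∧ S = conicSet M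

section QuadraticForms

variable {R n : Type*} [CommRing R] [Fintype n]

lemma Matrix.IsSymm.transpose_mul_mul {M : Matrix n n R} (hM : M.IsSymm) (A : Matrix n n R) :
    (Aᵀ * M * A).IsSymm := by
  simp [IsSymm, transpose_mul, hM.eq, Matrix.mul_assoc]

lemma Matrix.IsSymm.dotProduct_mulVec_comm {M : Matrix n n R} (hM : M.IsSymm) (v w : n → R) :
    v ⬝ᵥ M *ᵥ w = w ⬝ᵥ M *ᵥ v := by
  rw [dotProduct_mulVec, ← mulVec_transpose, hM.eq, dotProduct_comm]

lemma dotProduct_transpose_mul_mul_mulVec (M A : Matrix n n R) (v w : n → R) :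
    v ⬝ᵥ (Aᵀ * M * A) *ᵥ w = (A *ᵥ v) ⬝ᵥ M *ᵥ (A *ᵥ w) := by
  rw [← mulVec_mulVec, ← mulVec_mulVec, dotProduct_mulVec, vecMul_transpose]

end QuadraticForms

section Field

variable {F : Type*} [Field F]

lemma Matrix.IsSymm.exists_dotProduct_mulVec_eq_one {n : Type*} [Fintype n] [DecidableEq n]
    (h2 : (2 : F) ≠ 0) {M : Matrix n n F} (hM : M.IsSymm) (hMdet : IsUnit M.det) {e : n → F}
    (he : e ≠ 0) (hee : e ⬝ᵥ M *ᵥ e = 0) :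
    ∃ u, e ⬝ᵥ M *ᵥ u = 1 ∧ u ⬝ᵥ M *ᵥ u = 0 := by
  have hMe : M *ᵥ e ≠ 0 := fun h =>
    he <| mulVec_injective_iff_isUnit.2 ((isUnit_iff_isUnit_det M).2 hMdet) <|
      h.trans (mulVec_zero M).symm
  obtain ⟨j, hj⟩ := Function.ne_iff.1 hMe
  set u₁ : n → F := Pi.single j ((M *ᵥ e) j)⁻¹
  have hu₁ : e ⬝ᵥ M *ᵥ u₁ = 1 := by
    rw [hM.dotProduct_mulVec_comm, single_dotProduct, inv_mul_cancel₀ hj]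
  -- correct `u₁` along the isotropic vector `e` to make it isotropic too
  refine ⟨u₁ - (u₁ ⬝ᵥ M *ᵥ u₁ / 2) • e, ?_, ?_⟩
  · simp only [mulVec_sub, mulVec_smul, dotProduct_sub, dotProduct_smul, hee, hu₁, smul_eq_mul]
    ring
  · simp only [mulVec_sub, mulVec_smul, dotProduct_sub, dotProduct_smul, sub_dotProduct,
      smul_dotProduct, hee, hu₁, smul_eq_mul, hM.dotProduct_mulVec_comm u₁ e]
    field_simp
    ring

variable {M : Matrix (Fin 3) (Fin 3) F} {e u w : Fin 3 → F}

lemma linearIndependent_pair_of_hyperbolic (he : e ≠ 0) (hee : e ⬝ᵥ M *ᵥ e = 0)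
    (heu : e ⬝ᵥ M *ᵥ u = 1) : LinearIndependent F ![e, u] := by
  refine LinearIndependent.pair_iff.2 fun s t hst => ?_
  have ht : t = 0 := by
    simpa [mulVec_add, mulVec_smul, hee, heu] using congrArg (e ⬝ᵥ M *ᵥ ·) hst
  subst ht
  simpa [he] using hst

lemma linearIndependent_triple_of_hyperbolic (hM : M.IsSymm) (hee : e ⬝ᵥ M *ᵥ e = 0)
    (heu : e ⬝ᵥ M *ᵥ u = 1) (huu : u ⬝ᵥ M *ᵥ u = 0) (hew : e ⬝ᵥ M *ᵥ w = 0)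
    (huw : u ⬝ᵥ M *ᵥ w = 0) (hw : w ≠ 0) : LinearIndependent F ![e, u, w] := by
  refine Fintype.linearIndependent_iff.2 fun g hg => ?_
  rw [Fin.sum_univ_three] at hg
  have h1 : g 1 = 0 := by
    simpa [mulVec_add, mulVec_smul, hee, heu, hew] using congrArg (e ⬝ᵥ M *ᵥ ·) hg
  have h0 : g 0 = 0 := by
    simpa [mulVec_add, mulVec_smul, hM.dotProduct_mulVec_comm u e, heu, huu, huw] using
      congrArg (u ⬝ᵥ M *ᵥ ·) hg
  have h2 : g 2 = 0 := by simpa [h0, h1, hw] using hg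
  intro i
  fin_cases i <;> assumption

def hyperbolicForm (a : F) : Matrix (Fin 3) (Fin 3) F := !![0, 1, 0; 1, 0, 0; 0, 0, a]

lemma exists_transpose_mul_mul_eq_hyperbolicForm (h2 : (2 : F) ≠ 0) (hM : M.IsSymm)
    (hMdet : IsUnit M.det) (he : e ≠ 0) (hee : e ⬝ᵥ M *ᵥ e = 0) :
    ∃ (A : Matrix (Fin 3) (Fin 3) F) (a : F), IsUnit A ∧ Aᵀ * M * A = hyperbolicForm a := by
  obtain ⟨u, heu, huu⟩ := hM.exists_dotProduct_mulVec_eq_one h2 hMdet he hee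
  set w := M⁻¹ *ᵥ (e ⨯₃ u)
  have hMw : M *ᵥ w = e ⨯₃ u := by rw [mulVec_mulVec, mul_nonsing_inv _ hMdet, one_mulVec]
  have hew : e ⬝ᵥ M *ᵥ w = 0 := by rw [hMw, dot_self_cross]
  have huw : u ⬝ᵥ M *ᵥ w = 0 := by rw [hMw, dot_cross_self]
  have hw : w ≠ 0 := by
    intro hw
    apply crossProduct_ne_zero_iff_linearIndependent.2
      (linearIndependent_pair_of_hyperbolic he hee heu)
    rw [← hMw, hw, mulVec_zero]
  have hA : IsUnit (of ![e, u, w])ᵀ :=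
    (isUnit_transpose _).2 <| linearIndependent_rows_iff_isUnit.1 <|
      linearIndependent_triple_of_hyperbolic hM hee heu huu hew huw hw
  refine ⟨_, w ⬝ᵥ M *ᵥ w, hA, ?_⟩
  ext i j
  rw [mul_mul_apply, transpose_transpose]
  change ![e, u, w] i ⬝ᵥ M *ᵥ ![e, u, w] j = _
  fin_cases i <;> fin_cases j <;>
    simp [hyperbolicForm, hee, heu, huu, hew, huw, hM.dotProduct_mulVec_comm u e,
      hM.dotProduct_mulVec_comm w e, hM.dotProduct_mulVec_comm w u]

lemma Matrix.IsSymm.dotProduct_mulVec_self_fin_three {N : Matrix (Fin 3) (Fin 3) F}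
    (hN : N.IsSymm) (v : Fin 3 → F) :
    v ⬝ᵥ N *ᵥ v = N 0 0 * v 0 ^ 2 + N 1 1 * v 1 ^ 2 + N 2 2 * v 2 ^ 2 +
      2 * (N 0 1 * v 0 * v 1 + N 0 2 * v 0 * v 2 + N 1 2 * v 1 * v 2) := by
  simp [mulVec, dotProduct, Fin.sum_univ_three, hN.apply 0 1, hN.apply 0 2, hN.apply 1 2]
  ring

lemma dotProduct_hyperbolicForm_mulVec_self (a : F) (v : Fin 3 → F) :
    v ⬝ᵥ hyperbolicForm a *ᵥ v = 2 * v 0 * v 1 + a * v 2 ^ 2 := by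
  simp [hyperbolicForm, vecHead, vecTail]
  ring

lemma eq_smul_hyperbolicForm_of_forall_iff (h2 : (2 : F) ≠ 0) {a : F} (ha : a ≠ 0)
    {N : Matrix (Fin 3) (Fin 3) F} (hN : N.IsSymm)
    (hzero : ∀ v, v ⬝ᵥ hyperbolicForm a *ᵥ v = 0 ↔ v ⬝ᵥ N *ᵥ v = 0) :
    N = N 0 1 • hyperbolicForm a := by
  have hG := dotProduct_hyperbolicForm_mulVec_self a
  have hN' := hN.dotProduct_mulVec_self_fin_three
  have h00 : N 0 0 = 0 := by simpa [hN'] using (hzero ![1, 0, 0]).1 (by simp [hG])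
  have h11 : N 1 1 = 0 := by simpa [hN'] using (hzero ![0, 1, 0]).1 (by simp [hG])
  -- `hyperbolicForm a` has no zeros with `x₂ ≠ 0` on the lines `x₀ = 0` and `x₁ = 0`
  have h12 : N 1 2 = 0 := by
    by_contra h
    have := (hzero ![0, -N 2 2 / (2 * N 1 2), 1]).2 (by rw [hN']; simp [h11]; field_simp; ring)
    exact ha (by simpa [hG] using this)
  have h02 : N 0 2 = 0 := by
    by_contra h
    have := (hzero ![-N 2 2 / (2 * N 0 2), 0, 1]).2 (by rw [hN']; simp [h00]; field_simp; ring)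
    exact ha (by simpa [hG] using this)
  have h22 : N 2 2 = a * N 0 1 := by
    have := (hzero ![1, -a / 2, 1]).1 (by rw [hG]; simp; field_simp; ring)
    rw [hN'] at this
    simp [h00, h11, h12, h02] at this
    field_simp at this
    linear_combination this
  ext i j
  fin_cases i <;> fin_cases j <;>
    simp [hyperbolicForm, h00, h11, h12, h02, h22, hN.apply 0 1, hN.apply 0 2, hN.apply 1 2,
      mul_comm]

lemma det_hyperbolicForm (a : F) : (hyperbolicForm a).det = -a := by
  simp [hyperbolicForm, det_fin_three]

theorem Matrix.IsSymm.exists_eq_smul_of_forall_iff (h2 : (2 : F) ≠ 0) (hM : M.IsSymm)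
    (hMdet : IsUnit M.det) (he : e ≠ 0) (hee : e ⬝ᵥ M *ᵥ e = 0) {N : Matrix (Fin 3) (Fin 3) F}
    (hN : N.IsSymm) (hzero : ∀ v, v ⬝ᵥ M *ᵥ v = 0 ↔ v ⬝ᵥ N *ᵥ v = 0) :
    ∃ c : F, N = c • M := by
  obtain ⟨A, a, hA, hAMA⟩ := exists_transpose_mul_mul_eq_hyperbolicForm h2 hM hMdet he hee
  have ha : a ≠ 0 := by
    have hAdet := (isUnit_iff_isUnit_det A).1 hA
    have : IsUnit (Aᵀ * M * A).det := by
      rw [det_mul, det_mul, det_transpose]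
      exact (hAdet.mul hMdet).mul hAdet
    rw [hAMA, det_hyperbolicForm] at this
    exact neg_ne_zero.1 this.ne_zero
  have hAN := eq_smul_hyperbolicForm_of_forall_iff h2 ha (hN.transpose_mul_mul A) fun v => by
    rw [← hAMA, dotProduct_transpose_mul_mul_mulVec, dotProduct_transpose_mul_mul_mulVec]
    exact hzero _
  refine ⟨(Aᵀ * N * A) 0 1, ?_⟩
  rw [← hAMA, ← Matrix.smul_mul, ← Matrix.mul_smul] at hAN
  exact ((isUnit_transpose A).2 hA).mul_left_cancel (hA.mul_right_cancel hAN)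

end Field

section Conics

variable {F : Type} [Field F]

lemma mk_mem_conicSet_iff (M : Matrix (Fin 3) (Fin 3) F) {v : Fin 3 → F} (hv : v ≠ 0) :
    Projectivization.mk F v hv ∈ conicSet M ↔ v ⬝ᵥ M *ᵥ v = 0 := by
  obtain ⟨c, hc⟩ := Projectivization.exists_smul_eq_mk_rep F v hv
  simp [conicSet, ← hc, Units.smul_def, mulVec_smul, c.ne_zero]

lemma mk_one_zero_zero_mem_conicSet_iff (M : Matrix (Fin 3) (Fin 3) F)
    (h : (![1, 0, 0] : Fin 3 → F) ≠ 0) :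
    Projectivization.mk F ![1, 0, 0] h ∈ conicSet M ↔ M 0 0 = 0 := by
  simp [mk_mem_conicSet_iff, mulVec, dotProduct, Fin.sum_univ_three]

lemma forall_iff_of_conicSet_eq {M N : Matrix (Fin 3) (Fin 3) F} (h : conicSet M = conicSet N)
    (v : Fin 3 → F) : v ⬝ᵥ M *ᵥ v = 0 ↔ v ⬝ᵥ N *ᵥ v = 0 := by
  rcases eq_or_ne v 0 with rfl | hv
  · simp
  · rw [← mk_mem_conicSet_iff M hv, ← mk_mem_conicSet_iff N hv, h]

lemma conicSet_smul (M : Matrix (Fin 3) (Fin 3) F) {c : F} (hc : c ≠ 0) :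
    conicSet (c • M) = conicSet M := by
  ext p
  simp [conicSet, smul_mulVec, hc]

end Conics

section NormalForms

variable {F : Type} [Field F]

def normalizedConicMatrices : Set (Matrix (Fin 3) (Fin 3) F) :=
  {M | M.IsSymm ∧ M.det ≠ 0 ∧ M 0 0 = 0 ∧ (M 0 1 = 1 ∨ M 0 1 = 0 ∧ M 0 2 = 1)}

lemma exists_smul_mem_normalizedConicMatrices {M : Matrix (Fin 3) (Fin 3) F} (hM : M.IsSymm)
    (hMdet : M.det ≠ 0) (h00 : M 0 0 = 0) :
    ∃ c : F, c ≠ 0 ∧ c • M ∈ normalizedConicMatrices := by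
  have hrow : M 0 1 ≠ 0 ∨ M 0 2 ≠ 0 := by
    by_contra! h
    exact hMdet (det_eq_zero_of_row_eq_zero 0 fun j => by fin_cases j <;> simp [h00, h.1, h.2])
  obtain ⟨c, hc, hcrow⟩ : ∃ c : F, c ≠ 0 ∧ (c * M 0 1 = 1 ∨ c * M 0 1 = 0 ∧ c * M 0 2 = 1) := by
    by_cases h01 : M 0 1 = 0
    · have h02 := hrow.resolve_left (not_not.2 h01)
      exact ⟨(M 0 2)⁻¹, inv_ne_zero h02, Or.inr ⟨by simp [h01], inv_mul_cancel₀ h02⟩⟩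
    · exact ⟨(M 0 1)⁻¹, inv_ne_zero h01, Or.inl (inv_mul_cancel₀ h01)⟩
  exact ⟨c, hc, hM.smul c, by simp [hc, hMdet], by simp [h00], by simpa using hcrow⟩

lemma eq_one_of_normalized_rows {b c δ : F} (h : b = 1 ∨ b = 0 ∧ c = 1)
    (hδ : δ * b = 1 ∨ δ * b = 0 ∧ δ * c = 1) : δ = 1 := by
  rcases h with rfl | ⟨rfl, rfl⟩ <;> rcases hδ with hδ | ⟨hδ, hδ'⟩ <;> simp_all

lemma conicSet_injOn_normalizedConicMatrices (h2 : (2 : F) ≠ 0) :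
    Set.InjOn conicSet (normalizedConicMatrices (F := F)) := by
  rintro M ⟨hM, hMdet, h00, hrow⟩ N ⟨hN, -, -, hrowN⟩ hMN
  have he : (![1, 0, 0] : Fin 3 → F) ≠ 0 := fun h => by simpa using congrFun h 0
  obtain ⟨c, rfl⟩ := hM.exists_eq_smul_of_forall_iff h2 (isUnit_iff_ne_zero.2 hMdet) he
    (by simp [hM.dotProduct_mulVec_self_fin_three, h00]) hN (forall_iff_of_conicSet_eq hMN)
  have hc : c = 1 := eq_one_of_normalized_rows hrow (by simpa using hrowN)
  rw [hc, one_smul]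

lemma setOf_isProperConic_mem_eq_image (h : (![1, 0, 0] : Fin 3 → F) ≠ 0) :
    {S | IsProperConic S ∧ Projectivization.mk F ![1, 0, 0] h ∈ S} =
      conicSet '' normalizedConicMatrices := by
  ext S
  constructor
  · rintro ⟨⟨M, hM, hMdet, rfl⟩, hP⟩
    obtain ⟨c, hc, hcM⟩ := exists_smul_mem_normalizedConicMatrices hM hMdet.ne_zero
      ((mk_one_zero_zero_mem_conicSet_iff M h).1 hP)
    exact ⟨c • M, hcM, conicSet_smul M hc⟩
  · rintro ⟨M, ⟨hM, hMdet, h00, -⟩, rfl⟩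
    exact ⟨⟨M, hM, isUnit_iff_ne_zero.2 hMdet, rfl⟩, (mk_one_zero_zero_mem_conicSet_iff M h).2 h00⟩

end NormalForms

section Counting

lemma ncard_setOf_snd_ne {α β : Type*} [Fintype α] [Fintype β] (g : α → β) :
    {p : α × β | p.2 ≠ g p.1}.ncard = Fintype.card α * (Fintype.card β - 1) := by
  have hgraph : {p : α × β | p.2 ≠ g p.1} = (Set.range fun x => (x, g x))ᶜ := by
    ext ⟨x, y⟩
    simp [eq_comm]
  rw [hgraph, Set.ncard_compl, Set.ncard_range_of_injective fun x y h => (Prod.ext_iff.1 h).1,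
    Nat.card_eq_fintype_card, Nat.card_eq_fintype_card, Fintype.card_prod, Nat.mul_sub_one]

variable {F : Type} [Field F]

-- The determinant of each normal form is affine in the last coordinate, with coefficient `-1`.
def normalFormA (x : (F × F × F) × F) : Matrix (Fin 3) (Fin 3) F :=
  !![0, 1, x.1.1; 1, x.1.2.1, x.1.2.2; x.1.1, x.1.2.2, x.2]

def normalFormB (x : (F × F) × F) : Matrix (Fin 3) (Fin 3) F :=
  !![0, 0, 1; 0, x.2, x.1.1; 1, x.1.1, x.1.2]

lemma isSymm_normalFormA (x : (F × F × F) × F) : (normalFormA x).IsSymm :=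
  IsSymm.ext fun i j => by fin_cases i <;> fin_cases j <;> rfl

lemma isSymm_normalFormB (x : (F × F) × F) : (normalFormB x).IsSymm :=
  IsSymm.ext fun i j => by fin_cases i <;> fin_cases j <;> rfl

lemma det_normalFormA (x : (F × F × F) × F) :
    (normalFormA x).det = 2 * x.1.1 * x.1.2.2 - x.1.1 ^ 2 * x.1.2.1 - x.2 := by
  simp [normalFormA, det_fin_three]
  ring

lemma det_normalFormB (x : (F × F) × F) : (normalFormB x).det = -x.2 := by
  simp [normalFormB, det_fin_three]

lemma normalFormA_injective : Function.Injective (normalFormA (F := F)) := by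
  rintro ⟨⟨c, d, e⟩, f⟩ ⟨⟨c', d', e'⟩, f'⟩ h
  simp [normalFormA] at h
  simp [h]

lemma normalFormB_injective : Function.Injective (normalFormB (F := F)) := by
  rintro ⟨⟨e, f⟩, d⟩ ⟨⟨e', f'⟩, d'⟩ h
  simp [normalFormB] at h
  simp [h]

lemma normalizedConicMatrices_eq_union :
    normalizedConicMatrices (F := F) =
      normalFormA '' {x | (normalFormA x).det ≠ 0} ∪
        normalFormB '' {x | (normalFormB x).det ≠ 0} := by
  ext M
  constructor
  · rintro ⟨hM, hMdet, h00, h01 | ⟨h01, h02⟩⟩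
    · have hA : normalFormA ((M 0 2, M 1 1, M 1 2), M 2 2) = M := by
        ext i j
        fin_cases i <;> fin_cases j <;> simp [normalFormA, h00, h01, hM.apply 0 1, hM.apply 0 2,
          hM.apply 1 2]
      exact Or.inl ⟨_, show (normalFormA _).det ≠ 0 by rwa [hA], hA⟩
    · have hB : normalFormB ((M 1 2, M 2 2), M 1 1) = M := by
        ext i j
        fin_cases i <;> fin_cases j <;> simp [normalFormB, h00, h01, h02, hM.apply 0 1,
          hM.apply 0 2, hM.apply 1 2]
      exact Or.inr ⟨_, show (normalFormB _).det ≠ 0 by rwa [hB], hB⟩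
  · rintro (⟨x, hx, rfl⟩ | ⟨x, hx, rfl⟩)
    · exact ⟨isSymm_normalFormA x, hx, rfl, Or.inl rfl⟩
    · exact ⟨isSymm_normalFormB x, hx, rfl, Or.inr ⟨rfl, rfl⟩⟩

lemma ncard_normalizedConicMatrices [Fintype F] :
    (normalizedConicMatrices (F := F)).ncard =
      Fintype.card F ^ 2 * (Fintype.card F ^ 2 - 1) := by
  have hdisj : Disjoint (Set.range (normalFormA (F := F))) (Set.range normalFormB) :=
    Set.disjoint_left.2 fun _ ⟨x, hx⟩ ⟨y, hy⟩ => by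
      simpa [normalFormA, normalFormB] using congrFun (congrFun (hx.trans hy.symm) 0) 1
  have hA : {x : (F × F × F) × F | (normalFormA x).det ≠ 0}.ncard =
      Fintype.card (F × F × F) * (Fintype.card F - 1) := by
    rw [← ncard_setOf_snd_ne fun y : F × F × F => 2 * y.1 * y.2.2 - y.1 ^ 2 * y.2.1]
    congr 1
    ext x
    exact (det_normalFormA x ▸ sub_ne_zero).trans ne_comm
  have hB : {x : (F × F) × F | (normalFormB x).det ≠ 0}.ncard =
      Fintype.card (F × F) * (Fintype.card F - 1) := by
    rw [← ncard_setOf_snd_ne fun _ : F × F => (0 : F)]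
    congr 1
    ext x
    simp [det_normalFormB]
  rw [normalizedConicMatrices_eq_union,
    Set.ncard_union_eq (hdisj.mono (Set.image_subset_range _ _) (Set.image_subset_range _ _)),
    Set.ncard_image_of_injective _ normalFormA_injective,
    Set.ncard_image_of_injective _ normalFormB_injective, hA, hB]
  simp only [Fintype.card_prod]
  have hq : 1 ≤ Fintype.card F := Fintype.card_pos
  have hq2 : 1 ≤ Fintype.card F ^ 2 := Nat.one_le_pow _ _ hq
  zify [hq, hq2]
  ring

end Counting

/-- In `PG(2,q)`, `q` an odd prime power, there are exactly `q^2 * (q^2-1)` proper conics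
through the point `[1,0,0]`. -/
theorem num_proper_conics_through_one_point
    (F : Type) [Field F] [Fintype F] (hq : Odd (Fintype.card F)) :
    {S : Set (Projectivization F (Fin 3 → F)) | IsProperConic S ∧
        Projectivization.mk F (![1, 0, 0] : Fin 3 → F)
          (by intro h; simpa using congrFun h 0) ∈ S}.ncard
      = Fintype.card F ^ 2 * (Fintype.card F ^ 2 - 1) := by
  have h2 : (2 : F) ≠ 0 := Ring.two_ne_zero fun hchar => by
    simp [Nat.odd_iff, FiniteField.even_card_of_char_two hchar] at hq
  rw [setOf_isProperConic_mem_eq_image,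
    (conicSet_injOn_normalizedConicMatrices h2).ncard_image, ncard_normalizedConicMatrices]
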